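/- arXiv:1110.6228 — 5 statements merged into one kernel-verified Lean document; each statement's English description precedes it below -/
import Mathlib

section
/- Under the discrete AdaBoost recursion with optimal step sizes, if W⁻ₙ = 1/2 - βₙ with βₙ ∈ (0, 1/2) for all rounds n = 0, ..., N, then the training error satisfies ∑ᵢ w₀(i)·𝟙[yᵢ·H_N(i) ≤ 0] ≤ e^{-2·∑_{p=0}^{N} β_p²}. Moreover, if minᵢ w₀(i) > e^{-2·∑_{p=0}^{N} β_p²}, then every training point is correctly classified: yᵢ·H_N(i) > 0 for all i. -/
/-!
Each round multiplies the unnormalised weight of point `i` by `exp (-tₚ yᵢ hₚ(i))` and divides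
by `Zₚ`, so after `N + 1` rounds `w₀(i) exp (-yᵢ H_N(i)) = w_{N+1}(i) ∏ₚ Zₚ`; summing over `i`,
the exponential loss `∑ᵢ w₀(i) exp (-yᵢ H_N(i))` equals `∏ₚ Zₚ`. The optimal step makes
`Zₚ = 2 √(W⁻ₚ W⁺ₚ) = √(1 - 4βₚ²) ≤ exp (-2βₚ²)`, and the exponential loss dominates the
training error. A misclassified point alone already contributes `w₀(i)` to the training error,
which gives the second claim.
-/

open Real Finset

lemma mul_sqrt_div_self {a : ℝ} (b : ℝ) (ha : 0 < a) : a * √(b / a) = √(a * b) := by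
  rw [← sqrt_sq ha.le, ← sqrt_mul (sq_nonneg a), sqrt_sq ha.le]
  congr 1
  field_simp

lemma mul_exp_half_log_div_add {a b : ℝ} (ha : 0 < a) (hb : 0 < b) :
    a * exp (1 / 2 * log (b / a)) + b * exp (-(1 / 2 * log (b / a))) = 2 * √(a * b) := by
  have hlog : -(1 / 2 * log (b / a)) = log (a / b) / 2 := by
    rw [← inv_div a b, log_inv]; ring
  rw [hlog, one_div_mul_eq_div, exp_half, exp_half, exp_log (div_pos hb ha),
    exp_log (div_pos ha hb), mul_sqrt_div_self b ha, mul_sqrt_div_self a hb, mul_comm b]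
  ring

lemma two_mul_sqrt_half_sub_mul_half_add_le (β : ℝ) :
    2 * √((1 / 2 - β) * (1 / 2 + β)) ≤ exp (-2 * β ^ 2) := by
  have hsqrt : 2 * √((1 / 2 - β) * (1 / 2 + β)) = √(-(4 * β ^ 2) + 1) := by
    rw [show -(4 * β ^ 2) + 1 = 2 ^ 2 * ((1 / 2 - β) * (1 / 2 + β)) by ring,
      sqrt_mul (sq_nonneg 2), sqrt_sq zero_le_two]
  have hsq : exp (-(4 * β ^ 2)) = exp (-2 * β ^ 2) ^ 2 := by
    rw [← exp_nat_mul]; ring_nf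
  rw [hsqrt, ← sqrt_sq (exp_pos _).le, ← hsq]
  exact sqrt_le_sqrt (add_one_le_exp _)

section SignWeights

variable {ι : Type*} [Fintype ι] {s : ι → ℝ}

lemma sum_filter_eq_neg_one_add_sum_filter_eq_one (hs : ∀ i, s i = 1 ∨ s i = -1) (f : ι → ℝ) :
    ∑ i ∈ univ.filter (s · = -1), f i + ∑ i ∈ univ.filter (s · = 1), f i = ∑ i, f i := by
  have hcompl : univ.filter (fun i => ¬ s i = -1) = univ.filter (s · = 1) :=
    filter_congr fun i _ => by rcases hs i with h | h <;> norm_num [h]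
  rw [← hcompl, sum_filter_add_sum_filter_not]

lemma sum_mul_exp_neg_mul_of_sign (hs : ∀ i, s i = 1 ∨ s i = -1) (w : ι → ℝ) (t : ℝ) :
    ∑ i, w i * exp (-t * s i) =
      (∑ i ∈ univ.filter (s · = -1), w i) * exp t +
        (∑ i ∈ univ.filter (s · = 1), w i) * exp (-t) := by
  rw [← sum_filter_eq_neg_one_add_sum_filter_eq_one hs, sum_mul, sum_mul]
  congr 1 <;> refine sum_congr rfl fun i hi => ?_ <;> rw [(mem_filter.1 hi).2] <;> ring_nf

lemma sum_mul_exp_optimal_step_le (hs : ∀ i, s i = 1 ∨ s i = -1) {w : ι → ℝ}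
    (hw : ∑ i, w i = 1) {Wm Wp β : ℝ} (hWm : Wm = ∑ i ∈ univ.filter (s · = -1), w i)
    (hWp : Wp = ∑ i ∈ univ.filter (s · = 1), w i) (hβ : Wm = 1 / 2 - β) (hβlt : |β| < 1 / 2) :
    ∑ i, w i * exp (-(1 / 2 * log (Wp / Wm)) * s i) ≤ exp (-2 * β ^ 2) := by
  have hWp' : Wp = 1 / 2 + β := by
    have := sum_filter_eq_neg_one_add_sum_filter_eq_one hs w
    rw [← hWm, ← hWp, hw, hβ] at this
    linarith
  obtain ⟨hβl, hβu⟩ := abs_lt.1 hβlt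
  rw [sum_mul_exp_neg_mul_of_sign hs, ← hWm, ← hWp,
    mul_exp_half_log_div_add (by linarith) (by linarith), hβ, hWp']
  exact two_mul_sqrt_half_sub_mul_half_add_le β

end SignWeights

section ExpReweighting

variable {ι : Type*} [Fintype ι]

structure IsExpReweighting (w a : ℕ → ι → ℝ) (Z : ℕ → ℝ) : Prop where
  normalizer_eq : ∀ n, Z n = ∑ i, w n i * exp (a n i)
  succ_eq : ∀ n i, w (n + 1) i = w n i * exp (a n i) / Z n

namespace IsExpReweighting

variable {w a : ℕ → ι → ℝ} {Z : ℕ → ℝ}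

lemma normalizer_pos_of_pos (hR : IsExpReweighting w a Z) [Nonempty ι] {n : ℕ}
    (hn : ∀ i, 0 < w n i) : 0 < Z n := by
  rw [hR.normalizer_eq]
  exact sum_pos (fun i _ => mul_pos (hn i) (exp_pos _)) univ_nonempty

lemma pos (hR : IsExpReweighting w a Z) [Nonempty ι] (h0 : ∀ i, 0 < w 0 i) :
    ∀ n i, 0 < w n i := by
  intro n
  induction n with
  | zero => exact h0
  | succ n ih =>
    intro i
    rw [hR.succ_eq]
    exact div_pos (mul_pos (ih i) (exp_pos _)) (hR.normalizer_pos_of_pos ih)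

lemma normalizer_pos (hR : IsExpReweighting w a Z) [Nonempty ι] (h0 : ∀ i, 0 < w 0 i) (n : ℕ) :
    0 < Z n :=
  hR.normalizer_pos_of_pos (hR.pos h0 n)

lemma sum_succ_eq_one (hR : IsExpReweighting w a Z) {n : ℕ} (hZ : Z n ≠ 0) :
    ∑ i, w (n + 1) i = 1 := by
  simp_rw [hR.succ_eq, ← sum_div, ← hR.normalizer_eq, div_self hZ]

lemma mul_prod_normalizer (hR : IsExpReweighting w a Z) (hZ : ∀ n, Z n ≠ 0) (n : ℕ) (i : ι) :
    w n i * ∏ p ∈ range n, Z p = w 0 i * exp (∑ p ∈ range n, a p i) := by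
  induction n with
  | zero => simp
  | succ n ih =>
    rw [prod_range_succ, sum_range_succ, exp_add, hR.succ_eq, ← mul_assoc (w 0 i), ← ih]
    field_simp [hZ n]

lemma sum_mul_exp_eq_prod_normalizer (hR : IsExpReweighting w a Z) (hZ : ∀ n, Z n ≠ 0)
    (n : ℕ) : ∑ i, w 0 i * exp (∑ p ∈ range (n + 1), a p i) = ∏ p ∈ range (n + 1), Z p := by
  simp_rw [← hR.mul_prod_normalizer hZ, ← sum_mul, hR.sum_succ_eq_one (hZ n), one_mul]

end IsExpReweighting

end ExpReweighting

section TrainingError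

variable {ι : Type*} [Fintype ι] {w x : ι → ℝ}

lemma sum_mul_ite_nonpos_le_sum_mul_exp_neg (hw : ∀ i, 0 ≤ w i) :
    ∑ i, w i * (if x i ≤ 0 then (1 : ℝ) else 0) ≤ ∑ i, w i * exp (-x i) := by
  refine sum_le_sum fun i _ => mul_le_mul_of_nonneg_left ?_ (hw i)
  split_ifs with hx
  · exact one_le_exp (neg_nonneg.2 hx)
  · exact (exp_pos _).le

lemma pos_of_sum_mul_ite_nonpos_lt (hw : ∀ i, 0 ≤ w i)
    (hlt : ∀ i, ∑ j, w j * (if x j ≤ 0 then (1 : ℝ) else 0) < w i) (i : ι) : 0 < x i := by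
  by_contra hx
  have hle := single_le_sum (f := fun j => w j * (if x j ≤ 0 then (1 : ℝ) else 0))
    (fun j _ => mul_nonneg (hw j) (by split_ifs <;> norm_num)) (mem_univ i)
  simp only [if_pos (not_lt.1 hx), mul_one] at hle
  exact (hlt i).not_ge hle

end TrainingError

theorem stmt5 (m N : ℕ) (y : Fin m → ℝ) (hy : ∀ i, y i = 1 ∨ y i = -1)
    (h : ℕ → Fin m → ℝ) (hh : ∀ n i, h n i = 1 ∨ h n i = -1)
    (w : ℕ → Fin m → ℝ) (hw0 : ∀ i, 0 < w 0 i) (hw0sum : ∑ i, w 0 i = 1)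
    (Wm Wp : ℕ → ℝ)
    (hWm : ∀ n, Wm n = ∑ i ∈ Finset.univ.filter (fun i => y i * h n i = -1), w n i)
    (hWp : ∀ n, Wp n = ∑ i ∈ Finset.univ.filter (fun i => y i * h n i = 1), w n i)
    (β : ℕ → ℝ)
    (hβ : ∀ n ≤ N, Wm n = 1 / 2 - β n)
    (hβpos : ∀ n ≤ N, β n ∈ Set.Ioo (0 : ℝ) (1 / 2))
    (t : ℕ → ℝ) (ht : ∀ n, t n = (1 / 2) * Real.log (Wp n / Wm n))
    (Z : ℕ → ℝ) (hZ : ∀ n, Z n = ∑ i, w n i * Real.exp (-(t n) * (y i * h n i)))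
    (hwrec : ∀ n i, w (n + 1) i = w n i * Real.exp (-(t n) * (y i * h n i)) / Z n)
    (H : ℕ → Fin m → ℝ)
    (hH : ∀ n i, H n i = ∑ p ∈ Finset.range (n + 1), t p * h p i) :
    (∑ i, w 0 i * (if y i * H N i ≤ 0 then (1 : ℝ) else 0) ≤
        Real.exp (-2 * ∑ p ∈ Finset.range (N + 1), β p ^ 2)) ∧
    ((∀ i, Real.exp (-2 * ∑ p ∈ Finset.range (N + 1), β p ^ 2) < w 0 i) →
        ∀ i, 0 < y i * H N i) := by
  have : Nonempty (Fin m) := Fin.pos_iff_nonempty.1 <| Nat.pos_of_ne_zero <| by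
    rintro rfl; simp at hw0sum
  have hsign (n : ℕ) (i : Fin m) : y i * h n i = 1 ∨ y i * h n i = -1 := by
    rcases hy i with hy | hy <;> rcases hh n i with hh | hh <;> simp [hy, hh]
  have hR : IsExpReweighting w (fun n i => -t n * (y i * h n i)) Z := ⟨hZ, hwrec⟩
  have hZpos := hR.normalizer_pos hw0
  have hsum : ∀ n, ∑ i, w n i = 1
    | 0 => hw0sum
    | n + 1 => hR.sum_succ_eq_one (hZpos n).ne'
  have hZle (p : ℕ) (hp : p ∈ range (N + 1)) : Z p ≤ exp (-2 * β p ^ 2) := by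
    have hpN := Nat.lt_succ_iff.1 (mem_range.1 hp)
    obtain ⟨hβl, hβu⟩ := hβpos p hpN
    rw [hZ, ht]
    exact sum_mul_exp_optimal_step_le (hsign p) (hsum p) (hWm p) (hWp p) (hβ p hpN)
      (abs_lt.2 ⟨by linarith, hβu⟩)
  have hmargin (i : Fin m) : -(y i * H N i) = ∑ p ∈ range (N + 1), -t p * (y i * h p i) := by
    rw [hH, mul_sum, ← sum_neg_distrib]
    exact sum_congr rfl fun p _ => by ring
  have herror : ∑ i, w 0 i * (if y i * H N i ≤ 0 then (1 : ℝ) else 0) ≤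
      exp (-2 * ∑ p ∈ range (N + 1), β p ^ 2) :=
    calc _ ≤ ∑ i, w 0 i * exp (-(y i * H N i)) :=
          sum_mul_ite_nonpos_le_sum_mul_exp_neg fun i => (hw0 i).le
      _ = ∏ p ∈ range (N + 1), Z p := by
          simp_rw [hmargin]
          exact hR.sum_mul_exp_eq_prod_normalizer (fun n => (hZpos n).ne') N
      _ ≤ ∏ p ∈ range (N + 1), exp (-2 * β p ^ 2) :=
          prod_le_prod (fun p _ => (hZpos p).le) hZle
      _ = exp (-2 * ∑ p ∈ range (N + 1), β p ^ 2) := by rw [← exp_sum, mul_sum]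
  exact ⟨herror, fun hlt =>
    pos_of_sum_mul_ite_nonpos_lt (fun i => (hw0 i).le) fun i => herror.trans_lt (hlt i)⟩
end

section
/- Along the AdaBoost flow with fixed vector a (so Hₜ(k) evolves with yₖ·H'ₜ(xₖ) = aₖ and wₜ(k) = w₀(k)e^{-t·aₖ}/Z(t)), one has for all 0 ≤ p < t: log E(Hₜ, w_p) - log E(H_p, wₜ) = -∫_p^t σ_s ds, where E(H, w) = ∑ₖ wₖ·e^{-yₖ·H(xₖ)} and σ_s = ∑ₖ aₖ·w_s(k). -/
/-!
The weights are the Gibbs tilts `w_s(k) = w₀(k) e^{-s aₖ} / Z(s)` of `w₀`, and `σ_s` is the mean of `a`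
under them, which is `-(log Z)'(s)`; hence `∫_p^t σ = log Z(p) - log Z(t)`. On the other hand the margins
`yₖ H_s(xₖ)` grow linearly with slope `aₖ`, so in both `E(H_t, w_p)` and `E(H_p, w_t)` the exponentials
combine to the same numerator `∑ₖ w₀(k) e^{-t aₖ - yₖ H_p(xₖ)}`, leaving the quotient `Z(t) / Z(p)`.
-/

open Real

theorem eq_add_mul_of_hasDerivAt_const {f : ℝ → ℝ} {c : ℝ} (hf : ∀ s, HasDerivAt f c s) (p t : ℝ) :
    f t = f p + (t - p) * c := by
  have := intervalIntegral.integral_eq_sub_of_hasDerivAt (fun s _ => hf s)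
    (intervalIntegrable_const (a := p) (b := t) (c := c))
  rw [intervalIntegral.integral_const, smul_eq_mul] at this
  linarith

section Gibbs

variable {ι : Type*} [Fintype ι]

theorem sum_mul_exp_pos {w0 : ι → ℝ} (hw0 : ∀ k, 0 ≤ w0 k) (hpos : ∃ k, 0 < w0 k) (f : ι → ℝ) :
    0 < ∑ k, w0 k * exp (f k) := by
  obtain ⟨k, hk⟩ := hpos
  exact Finset.sum_pos' (fun j _ => mul_nonneg (hw0 j) (exp_pos _).le)
    ⟨k, Finset.mem_univ _, mul_pos hk (exp_pos _)⟩

variable (w0 a : ι → ℝ)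

noncomputable def gibbsPartition (s : ℝ) : ℝ := ∑ k, w0 k * exp (-s * a k)

noncomputable def gibbsWeight (s : ℝ) (k : ι) : ℝ := w0 k * exp (-s * a k) / gibbsPartition w0 a s

theorem continuous_gibbsPartition : Continuous (gibbsPartition w0 a) := by
  unfold gibbsPartition
  fun_prop

theorem hasDerivAt_gibbsPartition (s : ℝ) :
    HasDerivAt (gibbsPartition w0 a) (-∑ k, a k * (w0 k * exp (-s * a k))) s := by
  have hterm : ∀ k, HasDerivAt (fun u => w0 k * exp (-u * a k))
      (-(a k * (w0 k * exp (-s * a k)))) s := fun k =>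
    ((((hasDerivAt_neg' s).mul_const (a k)).exp).const_mul (w0 k)).congr_deriv (by ring)
  rw [← Finset.sum_neg_distrib]
  exact HasDerivAt.fun_sum fun k _ => hterm k

theorem sum_gibbsWeight_mul_exp (s : ℝ) (b : ι → ℝ) :
    ∑ k, gibbsWeight w0 a s k * exp (-b k) =
      (∑ k, w0 k * exp (-(s * a k + b k))) / gibbsPartition w0 a s := by
  simp only [gibbsWeight, Finset.sum_div, neg_add, exp_add, neg_mul]
  refine Finset.sum_congr rfl fun k _ => ?_
  ring

variable {w0}

theorem gibbsPartition_pos (hw0 : ∀ k, 0 ≤ w0 k) (hpos : ∃ k, 0 < w0 k) (s : ℝ) :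
    0 < gibbsPartition w0 a s :=
  sum_mul_exp_pos hw0 hpos _

theorem hasDerivAt_log_gibbsPartition (hw0 : ∀ k, 0 ≤ w0 k) (hpos : ∃ k, 0 < w0 k) (s : ℝ) :
    HasDerivAt (fun u => log (gibbsPartition w0 a u)) (-∑ k, a k * gibbsWeight w0 a s k) s := by
  convert (hasDerivAt_gibbsPartition w0 a s).log (gibbsPartition_pos a hw0 hpos s).ne' using 1
  simp only [gibbsWeight, mul_div_assoc', ← Finset.sum_div, neg_div]

theorem continuous_sum_mul_gibbsWeight (hw0 : ∀ k, 0 ≤ w0 k) (hpos : ∃ k, 0 < w0 k) :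
    Continuous fun s => ∑ k, a k * gibbsWeight w0 a s k := by
  have hZ := continuous_gibbsPartition w0 a
  have hZ0 := fun s => (gibbsPartition_pos a hw0 hpos s).ne'
  unfold gibbsWeight
  fun_prop (disch := exact hZ0 _)

theorem integral_sum_mul_gibbsWeight (hw0 : ∀ k, 0 ≤ w0 k) (hpos : ∃ k, 0 < w0 k) (p t : ℝ) :
    ∫ s in p..t, ∑ k, a k * gibbsWeight w0 a s k =
      log (gibbsPartition w0 a p) - log (gibbsPartition w0 a t) := by
  rw [← neg_sub, ← intervalIntegral.integral_eq_sub_of_hasDerivAt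
    (fun s _ => hasDerivAt_log_gibbsPartition a hw0 hpos s)
    ((continuous_sum_mul_gibbsWeight a hw0 hpos).intervalIntegrable p t).neg,
    intervalIntegral.integral_neg, neg_neg]

end Gibbs

theorem stmt8 (m : ℕ) (a y w0 : Fin m → ℝ) (hw0 : ∀ k, 0 ≤ w0 k) (hw0sum : ∑ k, w0 k = 1)
    (w : ℝ → Fin m → ℝ)
    (hw : ∀ t k, w t k = w0 k * Real.exp (-t * a k) / ∑ p, w0 p * Real.exp (-t * a p))
    (H : ℝ → Fin m → ℝ)
    (hH : ∀ t k, HasDerivAt (fun s => y k * H s k) (a k) t)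
    (E : (Fin m → ℝ) → (Fin m → ℝ) → ℝ)
    (hE : ∀ G v, E G v = ∑ k, v k * Real.exp (-(y k * G k)))
    (σ : ℝ → ℝ) (hσ : ∀ s, σ s = ∑ k, a k * w s k) :
    ∀ p t : ℝ, 0 ≤ p → p < t →
      Real.log (E (H t) (w p)) - Real.log (E (H p) (w t)) = -∫ s in p..t, σ s := by
  intro p t _ _
  have hpos : ∃ k, 0 < w0 k := by
    by_contra! h
    linarith [Finset.sum_nonpos fun k (_ : k ∈ Finset.univ) => h k]
  obtain rfl : w = gibbsWeight w0 a := funext₂ hw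
  simp_rw [hσ]
  have hmargin k : y k * H t k = y k * H p k + (t - p) * a k :=
    eq_add_mul_of_hasDerivAt_const (hH · k) p t
  set S := ∑ k, w0 k * exp (-(t * a k + y k * H p k))
  have hEt : E (H t) (gibbsWeight w0 a p) = S / gibbsPartition w0 a p := by
    rw [hE, sum_gibbsWeight_mul_exp]
    congr 1
    refine Finset.sum_congr rfl fun k _ => ?_
    rw [hmargin]
    congr 3
    ring
  have hEp : E (H p) (gibbsWeight w0 a t) = S / gibbsPartition w0 a t := by
    rw [hE, sum_gibbsWeight_mul_exp]
  have hS := (sum_mul_exp_pos hw0 hpos fun k => -(t * a k + y k * H p k)).ne'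
  rw [hEt, hEp, integral_sum_mul_gibbsWeight a hw0 hpos,
    log_div hS (gibbsPartition_pos a hw0 hpos p).ne', log_div hS (gibbsPartition_pos a hw0 hpos t).ne']
  ring
end

section
/- Let a classifier h take finitely many real values c₁, ..., c_p, and for a probability measure w₀ set W^{+,j} = w₀{i : h(xᵢ) = cⱼ, yᵢ = +1} and W^{-,j} = w₀{i : h(xᵢ) = cⱼ, yᵢ = -1}, assuming W^{+,j}·W^{-,j} > 0 for all j. Then for any Δ > 0, ∑ⱼ (W^{+,j}·e^{-Δ·cⱼ} + W^{-,j}·e^{Δ·cⱼ}) ≥ ∑ⱼ 2√(W^{+,j}·W^{-,j}), with equality if and only if cⱼ = (1/(2Δ))·log(W^{+,j}/W^{-,j}) for every j. -/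
lemma key_ineq (a b x : ℝ) (ha : 0 < a) (hb : 0 < b) :
    2 * Real.sqrt (a * b) ≤ a * Real.exp (-x) + b * Real.exp x ∧
    (a * Real.exp (-x) + b * Real.exp x = 2 * Real.sqrt (a * b) ↔
      x = (1/2) * Real.log (a / b)) := by
  set u := Real.sqrt (a * Real.exp (-x)) with hu
  set v := Real.sqrt (b * Real.exp x) with hv
  have hep : (0:ℝ) < Real.exp x := Real.exp_pos x
  have hem : (0:ℝ) < Real.exp (-x) := Real.exp_pos (-x)
  have hu2 : u ^ 2 = a * Real.exp (-x) := Real.sq_sqrt (by positivity)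
  have hv2 : v ^ 2 = b * Real.exp x := Real.sq_sqrt (by positivity)
  have huv : u * v = Real.sqrt (a * b) := by
    rw [hu, hv, ← Real.sqrt_mul (by positivity)]
    congr 1
    have he : Real.exp (-x) * Real.exp x = 1 := by rw [← Real.exp_add]; simp
    linear_combination a * b * he
  have hineq : 2 * Real.sqrt (a * b) ≤ a * Real.exp (-x) + b * Real.exp x := by
    nlinarith [sq_nonneg (u - v)]
  refine ⟨hineq, ?_, ?_⟩
  · intro heq
    have huveq : u = v := by
      have h1 : (u - v) ^ 2 = 0 := by nlinarith
      have := pow_eq_zero_iff (n := 2) (by norm_num) |>.mp h1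
      linarith
    have h2 : a * Real.exp (-x) = b * Real.exp x := by rw [← hu2, ← hv2, huveq]
    have h3 : Real.exp (2 * x) = a / b := by
      have : Real.exp x * Real.exp x = a / b := by
        field_simp at h2 ⊢
        rw [Real.exp_neg] at h2
        field_simp at h2
        nlinarith
      rw [two_mul, Real.exp_add, this]
    have h4 : 2 * x = Real.log (a / b) := by
      rw [← h3, Real.log_exp]
    linarith
  · intro hx
    subst hx
    have h3 : Real.exp (2 * ((1/2) * Real.log (a / b))) = a / b := by
      rw [show 2 * ((1/2) * Real.log (a/b)) = Real.log (a/b) by ring,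
        Real.exp_log (by positivity)]
    have hex : Real.exp ((1/2) * Real.log (a/b)) ^ 2 = a / b := by
      rw [sq, ← Real.exp_add, show (1/2) * Real.log (a/b) + (1/2) * Real.log (a/b) = 2 * ((1/2) * Real.log (a/b)) by ring]
      exact h3
    have hba : b * Real.exp ((1/2) * Real.log (a/b)) ^ 2 = a := by
      rw [hex]; field_simp
    have h2 : a * Real.exp (-((1/2) * Real.log (a/b))) = b * Real.exp ((1/2) * Real.log (a/b)) := by
      rw [Real.exp_neg, inv_eq_one_div, mul_one_div, div_eq_iff (ne_of_gt (Real.exp_pos _))]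
      nlinarith [hba]
    have huveq : u = v := by rw [hu, hv, h2]
    nlinarith [sq_nonneg u, Real.sqrt_nonneg (a*b)]

theorem stmt11 (m p : ℕ) (y h : Fin m → ℝ) (hy : ∀ i, y i = 1 ∨ y i = -1)
    (c : Fin p → ℝ) (hcinj : Function.Injective c)
    (hvals : ∀ i, ∃ j, h i = c j)
    (w0 : Fin m → ℝ) (hw0 : ∀ i, 0 ≤ w0 i) (hw0sum : ∑ i, w0 i = 1)
    (Wpj Wmj : Fin p → ℝ)
    (hWpj : ∀ j, Wpj j = ∑ i ∈ Finset.univ.filter (fun i => h i = c j ∧ y i = 1), w0 i)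
    (hWmj : ∀ j, Wmj j = ∑ i ∈ Finset.univ.filter (fun i => h i = c j ∧ y i = -1), w0 i)
    (hpos : ∀ j, 0 < Wpj j * Wmj j) :
    ∀ Δ : ℝ, 0 < Δ →
      (∑ j, 2 * Real.sqrt (Wpj j * Wmj j)) ≤
        ∑ j, (Wpj j * Real.exp (-Δ * c j) + Wmj j * Real.exp (Δ * c j)) ∧
      (∑ j, (Wpj j * Real.exp (-Δ * c j) + Wmj j * Real.exp (Δ * c j)) =
          ∑ j, 2 * Real.sqrt (Wpj j * Wmj j) ↔
        ∀ j, c j = (1 / (2 * Δ)) * Real.log (Wpj j / Wmj j)) := by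
  intro Δ hΔ
  have hWp : ∀ j, 0 < Wpj j := by
    intro j
    have hnn : 0 ≤ Wpj j := by
      rw [hWpj j]; exact Finset.sum_nonneg fun i _ => hw0 i
    have hnm : 0 ≤ Wmj j := by
      rw [hWmj j]; exact Finset.sum_nonneg fun i _ => hw0 i
    nlinarith [hpos j]
  have hWm : ∀ j, 0 < Wmj j := by
    intro j
    nlinarith [hpos j, (hWp j)]
  have key := fun j => key_ineq (Wpj j) (Wmj j) (Δ * c j) (hWp j) (hWm j)
  have hterm : ∀ j, Wpj j * Real.exp (-Δ * c j) + Wmj j * Real.exp (Δ * c j)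
      = Wpj j * Real.exp (-(Δ * c j)) + Wmj j * Real.exp (Δ * c j) := by
    intro j; ring_nf
  have hle : ∀ j ∈ Finset.univ, 2 * Real.sqrt (Wpj j * Wmj j) ≤
      Wpj j * Real.exp (-Δ * c j) + Wmj j * Real.exp (Δ * c j) := by
    intro j _; rw [hterm j]; exact (key j).1
  constructor
  · exact Finset.sum_le_sum hle
  · rw [eq_comm, Finset.sum_eq_sum_iff_of_le hle]
    constructor
    · intro hall j
      have := hall j (Finset.mem_univ j)
      rw [hterm j, eq_comm] at this
      have hx := (key j).2.mp this
      field_simp at hx ⊢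
      linarith
    · intro hall j _
      have hx : Δ * c j = (1/2) * Real.log (Wpj j / Wmj j) := by
        have := hall j
        field_simp at this ⊢
        linarith
      rw [hterm j, eq_comm]
      exact (key j).2.mpr hx
end

section
/- Let a : Fin m → {-1, 0, 1}, w₀ a probability vector with W⁺ = w₀{aᵢ=1}, W⁻ = w₀{aᵢ=-1} > 0, W⁰ = w₀{aᵢ=0} ∈ (0,1). Define Z(t) = W⁺e^{-t} + W⁻e^{t} + W⁰, α(t) = e^{-t}/Z(t), β(t) = 1/Z(t). Then for all t, W⁺·α(t)² + W⁰·α(t)·β(t) + W⁻·β(t)² - α(t) = 0. -/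
/-! Multiplying the claimed identity by `Z(t)²` turns it into
`W⁺e^{-2t} + W⁰e^{-t} + W⁻ = e^{-t} Z(t)`, which is the definition of `Z(t)` multiplied by `e^{-t}`,
since `e^{-t} e^{t} = 1`. All that is needed besides is `Z(t) ≠ 0`, and `Z(t) > 0` because the
weights are nonnegative and `W⁻ > 0`. -/

theorem quadric_of_mul_eq_one {p q r u v : ℝ} (huv : u * v = 1) (hZ : p * u + q * v + r ≠ 0) :
    p * (u / (p * u + q * v + r)) ^ 2 + r * (u / (p * u + q * v + r)) * (1 / (p * u + q * v + r))
      + q * (1 / (p * u + q * v + r)) ^ 2 - u / (p * u + q * v + r) = 0 := by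
  field_simp
  linear_combination -q * huv

theorem weighted_exp_sum_pos {p q r : ℝ} (hp : 0 ≤ p) (hq : 0 < q) (hr : 0 ≤ r) (t : ℝ) :
    0 < p * Real.exp (-t) + q * Real.exp t + r := by
  have := mul_nonneg hp (Real.exp_pos (-t)).le
  have := mul_pos hq (Real.exp_pos t)
  linarith

theorem stmt14_general (m : ℕ) (a w0 : Fin m → ℝ)
    (hw0 : ∀ i, 0 ≤ w0 i)
    (Wp Wm W0 : ℝ)
    (hWp : Wp = ∑ i ∈ Finset.univ.filter (fun i => a i = 1), w0 i)
    (hWmpos : 0 < Wm) (hW0mem : W0 ∈ Set.Ioo (0 : ℝ) 1)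
    (Z α β : ℝ → ℝ)
    (hZ : ∀ t, Z t = Wp * Real.exp (-t) + Wm * Real.exp t + W0)
    (hα : ∀ t, α t = Real.exp (-t) / Z t)
    (hβ : ∀ t, β t = 1 / Z t) :
    ∀ t, Wp * α t ^ 2 + W0 * α t * β t + Wm * β t ^ 2 - α t = 0 := by
  intro t
  have hWp_nonneg : 0 ≤ Wp := hWp ▸ Finset.sum_nonneg fun i _ => hw0 i
  have hZ_pos := weighted_exp_sum_pos hWp_nonneg hWmpos hW0mem.1.le t
  have hexp : Real.exp (-t) * Real.exp t = 1 := by rw [← Real.exp_add, neg_add_cancel, Real.exp_zero]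
  rw [hα, hβ, hZ]
  exact quadric_of_mul_eq_one hexp hZ_pos.ne'

theorem stmt14 (m : ℕ) (a w0 : Fin m → ℝ)
    (ha : ∀ i, a i = 1 ∨ a i = 0 ∨ a i = -1)
    (hw0 : ∀ i, 0 ≤ w0 i) (hw0sum : ∑ i, w0 i = 1)
    (Wp Wm W0 : ℝ)
    (hWp : Wp = ∑ i ∈ Finset.univ.filter (fun i => a i = 1), w0 i)
    (hWm : Wm = ∑ i ∈ Finset.univ.filter (fun i => a i = -1), w0 i)
    (hW0 : W0 = ∑ i ∈ Finset.univ.filter (fun i => a i = 0), w0 i)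
    (hWmpos : 0 < Wm) (hW0mem : W0 ∈ Set.Ioo (0 : ℝ) 1)
    (Z α β : ℝ → ℝ)
    (hZ : ∀ t, Z t = Wp * Real.exp (-t) + Wm * Real.exp t + W0)
    (hα : ∀ t, α t = Real.exp (-t) / Z t)
    (hβ : ∀ t, β t = 1 / Z t) :
    ∀ t, Wp * α t ^ 2 + W0 * α t * β t + Wm * β t ^ 2 - α t = 0 :=
  stmt14_general m a w0 hw0 Wp Wm W0 hWp hWmpos hW0mem Z α β hZ hα hβ
end

section
/- Under the substitution wₜ(k) = rₜ(k)², the AdaBoost flow equation d/dt wₜ(k) = (-λₖ + σₜ)·wₜ(k), σₜ = ∑_p λ_p·wₜ(p), restricted to the unit sphere ∑_p rₜ(p)² = 1 with rₜ(p) > 0, is the gradient flow d/dt rₜ(k) = -∂V/∂rₜ(k) of the potential V(r) = (∑_p λ_p·r_p²)/(4·∑_p r_p²). -/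
theorem stmt16 (m : ℕ) (lam : Fin m → ℝ)
    (V : (Fin m → ℝ) → ℝ)
    (hV : ∀ r : Fin m → ℝ, V r = (∑ p, lam p * r p ^ 2) / (4 * ∑ p, r p ^ 2))
    (r : ℝ → Fin m → ℝ)
    (hpos : ∀ t p, 0 < r t p)
    (hsphere : ∀ t, ∑ p, r t p ^ 2 = 1)
    (hflow : ∀ t k, HasDerivAt (fun s => r s k ^ 2)
      ((-(lam k) + ∑ p, lam p * r t p ^ 2) * r t k ^ 2) t) :
    ∀ t k, HasDerivAt (fun s => r s k)
      (-(deriv (fun x => V (Function.update (r t) k x)) (r t k))) t := by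
  intro t k
  set a := r t k with ha
  have hapos : 0 < a := hpos t k
  set σ := ∑ p, lam p * r t p ^ 2 with hσ
  set C := ∑ p ∈ Finset.univ.erase k, lam p * r t p ^ 2 with hC
  set D := ∑ p ∈ Finset.univ.erase k, r t p ^ 2 with hD
  have hσC : σ = lam k * a ^ 2 + C := by
    rw [hσ, hC, ← Finset.add_sum_erase _ _ (Finset.mem_univ k)]
  have hDa : a ^ 2 + D = 1 := by
    rw [hD, ← hsphere t, ← Finset.add_sum_erase _ (fun p => r t p ^ 2) (Finset.mem_univ k)]
  -- rewrite the potential along the k-th coordinate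
  have hg : (fun x : ℝ => V (Function.update (r t) k x))
      = fun x => (lam k * x ^ 2 + C) / (4 * (x ^ 2 + D)) := by
    funext x
    rw [hV]
    have hnum : ∑ p, lam p * Function.update (r t) k x p ^ 2 = lam k * x ^ 2 + C := by
      rw [← Finset.add_sum_erase _ _ (Finset.mem_univ k), Function.update_self]
      congr 1
      exact Finset.sum_congr rfl fun p hp => by
        rw [Function.update_of_ne (Finset.ne_of_mem_erase hp)]
    have hden : ∑ p, Function.update (r t) k x p ^ 2 = x ^ 2 + D := by
      rw [← Finset.add_sum_erase _ _ (Finset.mem_univ k), Function.update_self]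
      congr 1
      exact Finset.sum_congr rfl fun p hp => by
        rw [Function.update_of_ne (Finset.ne_of_mem_erase hp)]
    rw [hnum, hden]
  -- compute the derivative of the potential
  have hden_ne : (4 : ℝ) * (a ^ 2 + D) ≠ 0 := by rw [hDa]; norm_num
  have hnumd : HasDerivAt (fun x : ℝ => lam k * x ^ 2 + C) (lam k * (2 * a)) a := by
    have := ((hasDerivAt_pow 2 a).const_mul (lam k)).add_const C
    simpa [mul_comm, mul_assoc, mul_left_comm] using this
  have hdend : HasDerivAt (fun x : ℝ => 4 * (x ^ 2 + D)) (4 * (2 * a)) a := by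
    have := ((hasDerivAt_pow 2 a).add_const D).const_mul (4 : ℝ)
    simpa [mul_comm, mul_assoc, mul_left_comm] using this
  have hVd : HasDerivAt (fun x : ℝ => (lam k * x ^ 2 + C) / (4 * (x ^ 2 + D)))
      ((lam k * (2 * a) * (4 * (a ^ 2 + D)) - (lam k * a ^ 2 + C) * (4 * (2 * a)))
        / (4 * (a ^ 2 + D)) ^ 2) a := hnumd.div hdend hden_ne
  have hderiv : deriv (fun x => V (Function.update (r t) k x)) a
      = (lam k * (2 * a) * (4 * (a ^ 2 + D)) - (lam k * a ^ 2 + C) * (4 * (2 * a)))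
        / (4 * (a ^ 2 + D)) ^ 2 := by
    rw [hg]; exact hVd.deriv
  -- derivative of r itself via the square root
  have hsq := (hflow t k).sqrt (by positivity : a ^ 2 ≠ 0)
  have hfun : (fun s => Real.sqrt (r s k ^ 2)) = fun s => r s k := by
    funext s; exact Real.sqrt_sq (hpos s k).le
  have hsqa : Real.sqrt (a ^ 2) = a := Real.sqrt_sq hapos.le
  rw [hfun, hsqa] at hsq
  have : (-(lam k) + σ) * a ^ 2 / (2 * a)
      = -(deriv (fun x => V (Function.update (r t) k x)) a) := by
    rw [hderiv, hσC, hDa]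
    field_simp
    ring
  rw [← this]
  exact hsq
end
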